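/- arXiv:1402.1441 — 3 statements merged into one kernel-verified Lean document; each statement's English description precedes it below -/
import Mathlib

section
/- With d, μ, ν, λ fixed and D varying, as D → +∞: (a) the unique zero s₀(D) ∈ (0,1) of Φ_D tends to 1, equivalently θ₀(D) = arccos s₀(D) → 0; (b) for every θ ∈ (−π/2, π/2), w_*(θ; D) → c_K/cosθ, and w_*(±π/2; D) → +∞. -/
open Real Set

noncomputable section

/-- χ(s) = μ s / (ν + s). -/
def chiF (μ ν s : ℝ) : ℝ := μ * s / (ν + s)

/-- The set S(c) of points (β, α) with β > -ν/d and
c ξ₁ α + c ξ₂ β − D α² + χ(dβ) ≥ 0. -/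
def Sset (d D μ ν ξ1 ξ2 c : ℝ) : Set (ℝ × ℝ) :=
  {p : ℝ × ℝ | -(ν / d) < p.1 ∧
    0 ≤ c * ξ1 * p.2 + c * ξ2 * p.1 - D * p.2 ^ 2 + chiF μ ν (d * p.1)}

/-- The set G(c) of points (β, α) with c ξ₁ α + c ξ₂ β − d(α² + β²) ≥ λ. -/
def Gset (d lam ξ1 ξ2 c : ℝ) : Set (ℝ × ℝ) :=
  {p : ℝ × ℝ | lam ≤ c * ξ1 * p.2 + c * ξ2 * p.1 - d * (p.2 ^ 2 + p.1 ^ 2)}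

/-- w_*(ξ): the least c > 0 such that S(c) ∩ G(c) ≠ ∅. -/
def wstar (d D μ ν lam ξ1 ξ2 : ℝ) : ℝ :=
  sInf {c : ℝ | 0 < c ∧ (Sset d D μ ν ξ1 ξ2 c ∩ Gset d lam ξ1 ξ2 c).Nonempty}

/-- w_*(θ) := w_*((sin|θ|, cos|θ|)). -/
def wtheta (d D μ ν lam θ : ℝ) : ℝ :=
  wstar d D μ ν lam (Real.sin |θ|) (Real.cos |θ|)

/-- Φ(s) = 2d + D(s² − 1) + 4d²μs/(2νc_K + c_K²s). -/
def PhiF (d D μ ν cK s : ℝ) : ℝ :=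
  2 * d + D * (s ^ 2 - 1) + 4 * d ^ 2 * μ * s / (2 * ν * cK + cK ^ 2 * s)

/-!
For `ξ₂ > 0` the point `(β, α) = (c ξ₂ / 2d, 0)` lies in `S(c) ∩ G(c)` once `c ξ₂ ≥ c_K`, so
`w_* ≤ c_K / ξ₂`. Conversely, on `S(c) ∩ G(c)` the constraint `G` confines `(β, α)` to the disc
of radius `c / d`, after which `S` forces `D α² ≤ c² / d + μ`; so `α = O(D^{-1/2})`, and `G` then
gives `λ ≤ c |α| + (c ξ₂)² / 4d`. Hence every fixed `c < c_K / ξ₂` is inadmissible once `D` is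
large, and since admissible speeds are closed upwards, `w_* → c_K / ξ₂`. For `ξ₂ = 0` the same
estimate makes every fixed `c` eventually inadmissible, so `w_* → ∞`; here one also needs some
admissible speed (`|D| + d + λ` will do), as `sInf ∅ = 0`. Part (a) is read off `Φ_D(s₀) = 0`,
which gives `D (1 - s₀²) ≤ 2d + 4d²μ / c_K²`.
-/

open Filter Topology

def admissibleSpeeds (d D μ ν lam ξ1 ξ2 : ℝ) : Set ℝ :=
  {c : ℝ | 0 < c ∧ (Sset d D μ ν ξ1 ξ2 c ∩ Gset d lam ξ1 ξ2 c).Nonempty}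

section Admissible

variable {d D μ ν lam ξ1 ξ2 c : ℝ}

lemma chiF_nonneg {s : ℝ} (hμ : 0 ≤ μ) (hν : 0 ≤ ν) (hs : 0 ≤ s) : 0 ≤ chiF μ ν s := by
  unfold chiF; positivity

lemma chiF_le {s : ℝ} (hμ : 0 ≤ μ) (hν : 0 ≤ ν) (hs : 0 < ν + s) : chiF μ ν s ≤ μ := by
  rw [chiF, div_le_iff₀ hs]
  nlinarith

lemma inner_nonneg_of_mem_Gset {p : ℝ × ℝ} (hd : 0 ≤ d) (hlam : 0 ≤ lam) (hc : 0 < c)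
    (hp : p ∈ Gset d lam ξ1 ξ2 c) : 0 ≤ ξ1 * p.2 + ξ2 * p.1 := by
  have hp' : lam ≤ c * (ξ1 * p.2 + ξ2 * p.1) - d * (p.2 ^ 2 + p.1 ^ 2) := by
    simp only [Gset, mem_ofPred_eq] at hp; linarith
  have : 0 ≤ c * (ξ1 * p.2 + ξ2 * p.1) := by nlinarith [sq_nonneg p.1, sq_nonneg p.2]
  exact nonneg_of_mul_nonneg_right (by linarith) hc

lemma mem_admissibleSpeeds_of_le {c' : ℝ} (hd : 0 ≤ d) (hlam : 0 ≤ lam)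
    (hc : c ∈ admissibleSpeeds d D μ ν lam ξ1 ξ2) (hcc' : c ≤ c') :
    c' ∈ admissibleSpeeds d D μ ν lam ξ1 ξ2 := by
  obtain ⟨hc0, p, ⟨hβ, hS⟩, hG⟩ := hc
  have hinner := inner_nonneg_of_mem_Gset hd hlam hc0 hG
  have hgain : c * ξ1 * p.2 + c * ξ2 * p.1 ≤ c' * ξ1 * p.2 + c' * ξ2 * p.1 := by
    nlinarith [mul_le_mul_of_nonneg_right hcc' hinner]
  simp only [Gset, mem_ofPred_eq] at hG
  exact ⟨hc0.trans_le hcc', p, ⟨hβ, by linarith⟩, by simp only [Gset, mem_ofPred_eq]; linarith⟩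

lemma mem_admissibleSpeeds_of_sq_le (hd : 0 < d) (hμ : 0 ≤ μ) (hν : 0 < ν) (hc : 0 < c)
    (hξ2 : 0 < ξ2) (h : 4 * d * lam ≤ (c * ξ2) ^ 2) :
    c ∈ admissibleSpeeds d D μ ν lam ξ1 ξ2 := by
  set β := c * ξ2 / (2 * d)
  have hβ : 0 < β := by positivity
  have hGβ : lam ≤ c * ξ2 * β - d * β ^ 2 := by
    have : c * ξ2 * β - d * β ^ 2 = (c * ξ2) ^ 2 / (4 * d) := by
      simp only [β]; field_simp; ring
    rw [this, le_div_iff₀ (by positivity)]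
    linarith
  refine ⟨hc, (β, 0), ⟨by linarith [div_pos hν hd], ?_⟩, ?_⟩
  · show 0 ≤ c * ξ1 * 0 + c * ξ2 * β - D * 0 ^ 2 + chiF μ ν (d * β)
    have := chiF_nonneg hμ hν.le (mul_pos hd hβ).le
    have : 0 < c * ξ2 * β := by positivity
    linarith
  · show lam ≤ c * ξ1 * 0 + c * ξ2 * β - d * (0 ^ 2 + β ^ 2)
    linarith

lemma mem_admissibleSpeeds_one_zero (hd : 0 < d) (hν : 0 < ν) (hlam : 0 < lam) :
    |D| + d + lam ∈ admissibleSpeeds d D μ ν lam 1 0 := by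
  have hχ : chiF μ ν (d * 0) = 0 := by simp [chiF]
  refine ⟨by positivity, (0, 1), ⟨?_, ?_⟩, ?_⟩
  · exact neg_lt_zero.2 (div_pos hν hd)
  · show 0 ≤ (|D| + d + lam) * 1 * 1 + (|D| + d + lam) * 0 * 0 - D * 1 ^ 2 + chiF μ ν (d * 0)
    rw [hχ]
    linarith [le_abs_self D]
  · show lam ≤ (|D| + d + lam) * 1 * 1 + (|D| + d + lam) * 0 * 0 - d * (1 ^ 2 + 0 ^ 2)
    linarith [abs_nonneg D]

lemma sq_mul_add_mul_le_sq_add_sq (hξ : ξ1 ^ 2 + ξ2 ^ 2 ≤ 1) (a b : ℝ) :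
    (ξ1 * a + ξ2 * b) ^ 2 ≤ a ^ 2 + b ^ 2 := by
  nlinarith [sq_nonneg (ξ1 * b - ξ2 * a), sq_nonneg a, sq_nonneg b]

lemma sq_add_sq_le_of_mem_Gset {p : ℝ × ℝ} (hd : 0 < d) (hlam : 0 ≤ lam)
    (hξ : ξ1 ^ 2 + ξ2 ^ 2 ≤ 1) (hp : p ∈ Gset d lam ξ1 ξ2 c) :
    p.2 ^ 2 + p.1 ^ 2 ≤ (c / d) ^ 2 := by
  set r := p.2 ^ 2 + p.1 ^ 2
  set L := ξ1 * p.2 + ξ2 * p.1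
  have hdr : d * r ≤ c * L := by
    simp only [Gset, mem_ofPred_eq] at hp; linarith
  have hL : L ^ 2 ≤ r := sq_mul_add_mul_le_sq_add_sq hξ _ _
  have hr : 0 ≤ r := by positivity
  have hsq : (d * r) ^ 2 ≤ c ^ 2 * r := by
    calc (d * r) ^ 2 ≤ (c * L) ^ 2 := pow_le_pow_left₀ (by positivity) hdr 2
      _ = c ^ 2 * L ^ 2 := by ring
      _ ≤ c ^ 2 * r := by gcongr
  rw [div_pow, le_div_iff₀ (by positivity)]
  rcases hr.eq_or_lt with h0 | hpos
  · rw [← h0, zero_mul]; positivity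
  · nlinarith

lemma mul_sq_le_of_mem_Sset_inter_Gset {p : ℝ × ℝ} (hd : 0 < d) (hμ : 0 ≤ μ) (hν : 0 ≤ ν)
    (hlam : 0 ≤ lam) (hc : 0 ≤ c) (hD : 0 ≤ D) (hξ : ξ1 ^ 2 + ξ2 ^ 2 ≤ 1)
    (hp : p ∈ Sset d D μ ν ξ1 ξ2 c ∩ Gset d lam ξ1 ξ2 c)
    (hδ : (c * ξ2) ^ 2 / (4 * d) ≤ lam) :
    D * (lam - (c * ξ2) ^ 2 / (4 * d)) ^ 2 ≤ c ^ 2 * (c ^ 2 / d + μ) := by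
  obtain ⟨⟨hβ, hS⟩, hG⟩ := hp
  obtain ⟨β, α⟩ := p
  dsimp only at hβ hS
  have hr := sq_add_sq_le_of_mem_Gset hd hlam hξ hG
  simp only [Gset, mem_ofPred_eq] at hG
  have hL : ξ1 * α + ξ2 * β ≤ c / d := by
    refine (abs_le_of_sq_le_sq ?_ (by positivity)).trans' (le_abs_self _)
    exact (sq_mul_add_mul_le_sq_add_sq hξ α β).trans hr
  have hχ : chiF μ ν (d * β) ≤ μ := by
    refine chiF_le hμ hν ?_
    have := (div_lt_iff₀ hd).1 (neg_div d ν ▸ hβ)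
    linarith
  have hα : D * α ^ 2 ≤ c ^ 2 / d + μ := by
    have : c * (ξ1 * α + ξ2 * β) ≤ c * (c / d) := mul_le_mul_of_nonneg_left hL hc
    have : c * (c / d) = c ^ 2 / d := by ring
    nlinarith
  have hξ1 : ξ1 * α ≤ |α| := by
    have : |ξ1| ≤ 1 := abs_le_one_iff_mul_self_le_one.2 (by nlinarith)
    calc ξ1 * α ≤ |ξ1 * α| := le_abs_self _
      _ = |ξ1| * |α| := abs_mul _ _
      _ ≤ |α| := mul_le_of_le_one_left (abs_nonneg _) this
  have hβmax : c * ξ2 * β - d * β ^ 2 ≤ (c * ξ2) ^ 2 / (4 * d) := by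
    rw [le_div_iff₀ (by positivity)]
    nlinarith [sq_nonneg (2 * d * β - c * ξ2)]
  have hδα : lam - (c * ξ2) ^ 2 / (4 * d) ≤ c * |α| := by
    nlinarith [mul_le_mul_of_nonneg_left hξ1 hc, sq_nonneg α]
  calc D * (lam - (c * ξ2) ^ 2 / (4 * d)) ^ 2 ≤ D * (c * |α|) ^ 2 := by
        gcongr
    _ = c ^ 2 * (D * α ^ 2) := by rw [mul_pow, sq_abs]; ring
    _ ≤ c ^ 2 * (c ^ 2 / d + μ) := by gcongr

lemma eventually_notMem_admissibleSpeeds (hd : 0 < d) (hμ : 0 ≤ μ) (hν : 0 ≤ ν)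
    (hc : 0 ≤ c) (hξ : ξ1 ^ 2 + ξ2 ^ 2 ≤ 1) (hδ : (c * ξ2) ^ 2 / (4 * d) < lam) :
    ∀ᶠ D in atTop, c ∉ admissibleSpeeds d D μ ν lam ξ1 ξ2 := by
  have hδ' : 0 < (lam - (c * ξ2) ^ 2 / (4 * d)) ^ 2 := by
    have := sub_pos.2 hδ
    positivity
  filter_upwards [eventually_ge_atTop 0,
    eventually_gt_atTop (c ^ 2 * (c ^ 2 / d + μ) / (lam - (c * ξ2) ^ 2 / (4 * d)) ^ 2)]
    with D hD0 hD ⟨_, p, hp⟩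
  have hlam : 0 ≤ lam := (div_nonneg (sq_nonneg _) (by positivity)).trans hδ.le
  have := mul_sq_le_of_mem_Sset_inter_Gset hd hμ hν hlam hc hD0 hξ hp hδ.le
  rw [div_lt_iff₀ hδ'] at hD
  linarith

lemma wstar_nonneg : 0 ≤ wstar d D μ ν lam ξ1 ξ2 :=
  Real.sInf_nonneg fun _ hc => hc.1.le

lemma wstar_le_of_mem (hc : c ∈ admissibleSpeeds d D μ ν lam ξ1 ξ2) : wstar d D μ ν lam ξ1 ξ2 ≤ c :=
  csInf_le ⟨0, fun _ hx => hx.1.le⟩ hc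

lemma le_wstar_of_notMem (hd : 0 ≤ d) (hlam : 0 ≤ lam)
    (hne : (admissibleSpeeds d D μ ν lam ξ1 ξ2).Nonempty)
    (hc : c ∉ admissibleSpeeds d D μ ν lam ξ1 ξ2) : c ≤ wstar d D μ ν lam ξ1 ξ2 :=
  le_csInf hne fun _ hc' => le_of_not_ge fun h => hc (mem_admissibleSpeeds_of_le hd hlam hc' h)

end Admissible

variable {d μ ν lam ξ1 ξ2 : ℝ}

theorem tendsto_wstar (hd : 0 < d) (hμ : 0 ≤ μ) (hν : 0 < ν) (hlam : 0 < lam)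
    (hξ : ξ1 ^ 2 + ξ2 ^ 2 ≤ 1) (hξ2 : 0 < ξ2) :
    Tendsto (fun D => wstar d D μ ν lam ξ1 ξ2) atTop (𝓝 (2 * √(d * lam) / ξ2)) := by
  set L := 2 * √(d * lam) / ξ2
  have hLξ2 : (L * ξ2) ^ 2 = 4 * d * lam := by
    rw [div_mul_cancel₀ _ hξ2.ne', mul_pow, Real.sq_sqrt (by positivity)]; ring
  have hL : ∀ D, L ∈ admissibleSpeeds d D μ ν lam ξ1 ξ2 := fun _ =>
    mem_admissibleSpeeds_of_sq_le hd hμ hν (by positivity) hξ2 hLξ2.ge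
  refine tendsto_order.2
    ⟨fun a ha => ?_, fun a ha => .of_forall fun D => (wstar_le_of_mem (hL D)).trans_lt ha⟩
  obtain ⟨c, hac, hcL⟩ := exists_between (max_lt ha (by positivity : 0 < L))
  have hc : 0 < c := (le_max_right _ _).trans_lt hac
  have hδ : (c * ξ2) ^ 2 / (4 * d) < lam := by
    rw [div_lt_iff₀ (by positivity), mul_comm lam, ← hLξ2]
    gcongr
  filter_upwards [eventually_notMem_admissibleSpeeds hd hμ hν.le hc.le hξ hδ] with D hD
  exact (le_max_left _ _).trans_lt (hac.trans_le (le_wstar_of_notMem hd.le hlam.le ⟨L, hL D⟩ hD))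

theorem tendsto_wstar_one_zero (hd : 0 < d) (hμ : 0 ≤ μ) (hν : 0 < ν) (hlam : 0 < lam) :
    Tendsto (fun D => wstar d D μ ν lam 1 0) atTop atTop := by
  refine tendsto_atTop.2 fun b => ?_
  have hM : (0:ℝ) < max b 1 := lt_max_of_lt_right one_pos
  filter_upwards [eventually_notMem_admissibleSpeeds (ξ1 := 1) (ξ2 := 0) hd hμ hν.le hM.le
    (by norm_num) (by simpa using hlam)] with D hD
  exact (le_max_left _ _).trans
    (le_wstar_of_notMem hd.le hlam.le ⟨_, mem_admissibleSpeeds_one_zero hd hν hlam⟩ hD)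

lemma one_sub_le_of_PhiF_eq_zero {D cK s : ℝ} (hμ : 0 ≤ μ) (hν : 0 ≤ ν)
    (hcK : 0 < cK) (hD : 0 < D) (hs : s ∈ Ioo (0:ℝ) 1) (hΦ : PhiF d D μ ν cK s = 0) :
    1 - s ≤ (2 * d + 4 * d ^ 2 * μ / cK ^ 2) / D := by
  obtain ⟨hs0, hs1⟩ := hs
  have hfrac : 4 * d ^ 2 * μ * s / (2 * ν * cK + cK ^ 2 * s) ≤ 4 * d ^ 2 * μ / cK ^ 2 :=
    calc 4 * d ^ 2 * μ * s / (2 * ν * cK + cK ^ 2 * s)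
        ≤ 4 * d ^ 2 * μ * s / (cK ^ 2 * s) :=
          div_le_div_of_nonneg_left (by positivity) (by positivity) (by nlinarith)
      _ = 4 * d ^ 2 * μ / cK ^ 2 := mul_div_mul_right _ _ hs0.ne'
  rw [le_div_iff₀ hD]
  unfold PhiF at hΦ
  nlinarith [mul_nonneg hD.le (mul_nonneg hs0.le (sub_pos.2 hs1).le)]

theorem tendsto_one_of_PhiF_eq_zero (hd : 0 < d) (hμ : 0 ≤ μ) (hν : 0 ≤ ν) (hlam : 0 < lam)
    {s₀ : ℝ → ℝ} (hs₀ : ∀ D : ℝ, 2 * d < D →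
      s₀ D ∈ Ioo (0:ℝ) 1 ∧ PhiF d D μ ν (2 * √(d * lam)) (s₀ D) = 0) :
    Tendsto s₀ atTop (𝓝 1) := by
  set K := 2 * d + 4 * d ^ 2 * μ / (2 * √(d * lam)) ^ 2
  have hlower : Tendsto (fun D => 1 - K / D) atTop (𝓝 1) := by
    simpa using tendsto_const_nhds.sub (tendsto_const_nhds (x := K).div_atTop tendsto_id)
  refine tendsto_of_tendsto_of_tendsto_of_le_of_le' hlower tendsto_const_nhds ?_ ?_ <;>
    filter_upwards [eventually_gt_atTop (2 * d)] with D hD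
  · have := one_sub_le_of_PhiF_eq_zero hμ hν (by positivity) (by linarith) (hs₀ D hD).1
      (hs₀ D hD).2
    linarith
  · exact (hs₀ D hD).1.2.le

theorem statement2
    (d μ ν lam : ℝ) (hd : 0 < d) (hμ : 0 < μ) (hν : 0 < ν) (hlam : 0 < lam)
    (s₀ : ℝ → ℝ)
    (hs₀ : ∀ D : ℝ, 2 * d < D →
      s₀ D ∈ Ioo (0:ℝ) 1 ∧
      PhiF d D μ ν (2 * Real.sqrt (d * lam)) (s₀ D) = 0) :
    -- (a) s₀(D) → 1, equivalently θ₀(D) = arccos s₀(D) → 0, as D → ∞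
    Filter.Tendsto s₀ Filter.atTop (nhds 1) ∧
    Filter.Tendsto (fun D => Real.arccos (s₀ D)) Filter.atTop (nhds 0) ∧
    -- (b) w_*(θ; D) → c_K / cos θ for |θ| < π/2, and w_*(±π/2; D) → +∞
    (∀ θ ∈ Ioo (-(π/2)) (π/2),
      Filter.Tendsto (fun D => wtheta d D μ ν lam θ) Filter.atTop
        (nhds (2 * Real.sqrt (d * lam) / Real.cos θ))) ∧
    Filter.Tendsto (fun D => wtheta d D μ ν lam (π/2)) Filter.atTop Filter.atTop ∧
    Filter.Tendsto (fun D => wtheta d D μ ν lam (-(π/2))) Filter.atTop Filter.atTop := by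
  have hs₀_lim := tendsto_one_of_PhiF_eq_zero hd hμ.le hν.le hlam hs₀
  have hside : ∀ θ, |θ| = π / 2 →
      (fun D => wtheta d D μ ν lam θ) = fun D => wstar d D μ ν lam 1 0 := fun θ hθ => by
    funext D
    rw [wtheta, hθ, sin_pi_div_two, cos_pi_div_two]
  refine ⟨hs₀_lim, ?_, fun θ hθ => ?_, ?_, ?_⟩
  · simpa only [Function.comp_def, arccos_one] using (continuous_arccos.tendsto 1).comp hs₀_lim
  · have hcos : 0 < cos |θ| :=
      cos_pos_of_mem_Ioo ⟨by linarith [abs_nonneg θ, pi_pos], abs_lt.2 hθ⟩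
    rw [← cos_abs θ]
    exact tendsto_wstar hd hμ.le hν hlam (sin_sq_add_cos_sq |θ|).le hcos
  · rw [hside _ (abs_of_pos pi_div_two_pos)]
    exact tendsto_wstar_one_zero hd hμ.le hν hlam
  · rw [hside _ (by rw [abs_neg, abs_of_pos pi_div_two_pos])]
    exact tendsto_wstar_one_zero hd hμ.le hν hlam
end
end

section
/- Assume D > 2d. For every θ ∈ [θ₀, π/2] and every θ̃ ∈ [0, π/2], one has w_*(θ̃) ≤ (cos(θ − φ_*(θ)) / cos(θ̃ − φ_*(θ))) · w_*(θ), where φ_*(θ) = arctan(α_*(θ)/β_*(θ)). -/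
open Real Set

noncomputable section

/-!
The sets `S(c)` and `G(c)` depend on `c` and `ξ` only through the linear form
`c (ξ₁ α + ξ₂ β)`. So if `p = (β, α)` lies in `S(w) ∩ G(w)` for the direction `ξ`, the
same point lies in `S(c') ∩ G(c')` for another direction `η` as soon as `c' (η · p) = w (ξ · p)`,
whence `w_*(η) ≤ w (ξ · p) / (η · p)`. In polar form `ξ · p = |p| cos(θ - φ)` with
`φ = arctan (α / β)`, and this ratio is the one in the theorem.
-/

section Rescaling

variable {d D μ ν lam : ℝ}

lemma mem_Sset_congr {ξ1 ξ2 c η1 η2 c' : ℝ} {p : ℝ × ℝ}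
    (h : c * ξ1 * p.2 + c * ξ2 * p.1 = c' * η1 * p.2 + c' * η2 * p.1) :
    p ∈ Sset d D μ ν ξ1 ξ2 c ↔ p ∈ Sset d D μ ν η1 η2 c' := by
  simp only [Sset, mem_ofPred_eq, h]

lemma mem_Gset_congr {ξ1 ξ2 c η1 η2 c' : ℝ} {p : ℝ × ℝ}
    (h : c * ξ1 * p.2 + c * ξ2 * p.1 = c' * η1 * p.2 + c' * η2 * p.1) :
    p ∈ Gset d lam ξ1 ξ2 c ↔ p ∈ Gset d lam η1 η2 c' := by
  simp only [Gset, mem_ofPred_eq, h]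

lemma wstar_le {η1 η2 c : ℝ} {p : ℝ × ℝ} (hc : 0 < c)
    (hp : p ∈ Sset d D μ ν η1 η2 c ∩ Gset d lam η1 η2 c) :
    wstar d D μ ν lam η1 η2 ≤ c :=
  csInf_le ⟨0, fun _ h => h.1.le⟩ ⟨hc, p, hp⟩

lemma wstar_le_of_mem_inter {ξ1 ξ2 η1 η2 c : ℝ} {p : ℝ × ℝ}
    (hd : 0 ≤ d) (hlam : 0 < lam) (hp : p ∈ Sset d D μ ν ξ1 ξ2 c ∩ Gset d lam ξ1 ξ2 c)
    (hη : 0 < η1 * p.2 + η2 * p.1) :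
    wstar d D μ ν lam η1 η2 ≤ c * (ξ1 * p.2 + ξ2 * p.1) / (η1 * p.2 + η2 * p.1) := by
  set c' := c * (ξ1 * p.2 + ξ2 * p.1) / (η1 * p.2 + η2 * p.1)
  have hrescale : c * ξ1 * p.2 + c * ξ2 * p.1 = c' * η1 * p.2 + c' * η2 * p.1 := by
    have hc'η : c' * (η1 * p.2 + η2 * p.1) = c * (ξ1 * p.2 + ξ2 * p.1) :=
      div_mul_cancel₀ _ hη.ne'
    linear_combination -hc'η
  have hc' : 0 < c' := by
    have hG : lam ≤ c * ξ1 * p.2 + c * ξ2 * p.1 - d * (p.2 ^ 2 + p.1 ^ 2) := hp.2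
    have : 0 < c * (ξ1 * p.2 + ξ2 * p.1) := by nlinarith [sq_nonneg p.1, sq_nonneg p.2]
    positivity
  exact wstar_le hc' ⟨(mem_Sset_congr hrescale).1 hp.1, (mem_Gset_congr hrescale).1 hp.2⟩

end Rescaling

lemma sin_mul_add_cos_mul_eq {a b : ℝ} (hb : 0 < b) (x : ℝ) :
    sin x * a + cos x * b = √(a ^ 2 + b ^ 2) * cos (x - arctan (a / b)) := by
  have hsq : a ^ 2 + b ^ 2 = b ^ 2 * (1 + (a / b) ^ 2) := by field_simp; ring
  have hr : √(a ^ 2 + b ^ 2) = b * √(1 + (a / b) ^ 2) := by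
    rw [hsq, sqrt_mul (sq_nonneg b), sqrt_sq hb.le]
  rw [hr, cos_sub, cos_arctan, sin_arctan]
  have : √(1 + (a / b) ^ 2) ≠ 0 := by positivity
  field_simp
  ring

theorem statement7_general
    (d D μ ν lam : ℝ) (hd : 0 < d)
    (hlam : 0 < lam)
    (θ₀ : ℝ)
    (αs βs : ℝ → ℝ)
    (hsingle : ∀ θ ∈ Icc θ₀ (π/2),
      Sset d D μ ν (Real.sin θ) (Real.cos θ)
          (wstar d D μ ν lam (Real.sin θ) (Real.cos θ)) ∩
        Gset d lam (Real.sin θ) (Real.cos θ)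
          (wstar d D μ ν lam (Real.sin θ) (Real.cos θ)) = {(βs θ, αs θ)} ∧
      0 < αs θ ∧ 0 < βs θ) :
    ∀ θ ∈ Icc θ₀ (π/2), ∀ θ' ∈ Icc (0:ℝ) (π/2),
      wstar d D μ ν lam (Real.sin θ') (Real.cos θ') ≤
        (Real.cos (θ - Real.arctan (αs θ / βs θ)) /
          Real.cos (θ' - Real.arctan (αs θ / βs θ))) *
          wstar d D μ ν lam (Real.sin θ) (Real.cos θ) := by
  intro θ hθ θ' hθ'
  obtain ⟨hset, hα, hβ⟩ := hsingle θ hθ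
  have hmem : (βs θ, αs θ) ∈
      Sset d D μ ν (sin θ) (cos θ) (wstar d D μ ν lam (sin θ) (cos θ)) ∩
        Gset d lam (sin θ) (cos θ) (wstar d D μ ν lam (sin θ) (cos θ)) := by
    rw [hset]; rfl
  have hφ : 0 < arctan (αs θ / βs θ) := arctan_pos.2 (div_pos hα hβ)
  have hcos' : 0 < cos (θ' - arctan (αs θ / βs θ)) :=
    cos_pos_of_mem_Ioo
      ⟨by linarith [hθ'.1, arctan_lt_pi_div_two (αs θ / βs θ)], by linarith [hθ'.2]⟩
  have hr : 0 < √(αs θ ^ 2 + βs θ ^ 2) := by positivity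
  calc wstar d D μ ν lam (sin θ') (cos θ')
      ≤ wstar d D μ ν lam (sin θ) (cos θ) * (sin θ * αs θ + cos θ * βs θ) /
          (sin θ' * αs θ + cos θ' * βs θ) :=
        wstar_le_of_mem_inter hd.le hlam hmem
          (by rw [sin_mul_add_cos_mul_eq hβ]; positivity)
    _ = _ := by
        rw [sin_mul_add_cos_mul_eq hβ, sin_mul_add_cos_mul_eq hβ]
        field_simp

theorem statement7
    (d D μ ν lam : ℝ) (hd : 0 < d) (hD : 2 * d < D) (hμ : 0 < μ) (hν : 0 < ν)
    (hlam : 0 < lam)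
    (s₀ : ℝ) (hs₀ : s₀ ∈ Ioo (0:ℝ) 1)
    (hs₀zero : PhiF d D μ ν (2 * Real.sqrt (d * lam)) s₀ = 0)
    (θ₀ : ℝ) (hθ₀ : θ₀ = Real.arccos s₀)
    (αs βs : ℝ → ℝ)
    (hsingle : ∀ θ ∈ Icc θ₀ (π/2),
      Sset d D μ ν (Real.sin θ) (Real.cos θ)
          (wstar d D μ ν lam (Real.sin θ) (Real.cos θ)) ∩
        Gset d lam (Real.sin θ) (Real.cos θ)
          (wstar d D μ ν lam (Real.sin θ) (Real.cos θ)) = {(βs θ, αs θ)} ∧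
      0 < αs θ ∧ 0 < βs θ) :
    ∀ θ ∈ Icc θ₀ (π/2), ∀ θ' ∈ Icc (0:ℝ) (π/2),
      wstar d D μ ν lam (Real.sin θ') (Real.cos θ') ≤
        (Real.cos (θ - Real.arctan (αs θ / βs θ)) /
          Real.cos (θ' - Real.arctan (αs θ / βs θ))) *
          wstar d D μ ν lam (Real.sin θ) (Real.cos θ) :=
  statement7_general d D μ ν lam hd hlam θ₀ αs βs hsingle
end
end

section
/- One has w_*(ξ) = c_K if and only if c_K²/(2d) − D c_K² ξ₁²/(4d²) ≥ −μ c_K ξ₂/(2ν + c_K ξ₂), which is equivalent to Φ(ξ₂) ≥ 0; consequently w_*(ξ) = c_K if and only if either D ≤ 2d, or D > 2d and ξ₂ ≥ s₀, where s₀ is the unique zero of Φ in (0,1). -/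
/-!
Completing the square, `4d(cξ₁α + cξ₂β − d(α² + β²)) = c² − (2dβ − cξ₂)² − (2dα − cξ₁)²`, so
G(c) is empty for c < c_K and is the disc of radius `√(c² − c_K²) / 2d` about the point
`(cξ₂/2d, cξ₁/2d)`, which collapses to that point as c ↓ c_K. Hence w_*(ξ) = c_K exactly when
the vertex `(c_Kξ₂/2d, c_Kξ₁/2d)` lies in S(c_K): if it does, c_K is attained; conversely,
points of S(c) ∩ G(c) with c ↓ c_K converge to the vertex, and the defining inequality of S
passes to the limit. At the vertex that inequality is the stated condition, which is
`(c_K²/4d²) Φ(ξ₂) ≥ 0`. Finally Φ is strictly increasing on [0, ∞), and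
`Φ(s) ≥ 2d + D(s² − 1) ≥ 0` for s ∈ [0, 1] when D ≤ 2d.
-/

open Real Set

noncomputable section

open Filter Topology

def gVertex (d ξ1 ξ2 c : ℝ) : ℝ × ℝ := (c * ξ2 / (2 * d), c * ξ1 / (2 * d))

def Sfun (d D μ ν ξ1 ξ2 c : ℝ) (p : ℝ × ℝ) : ℝ :=
  c * ξ1 * p.2 + c * ξ2 * p.1 - D * p.2 ^ 2 + chiF μ ν (d * p.1)

section

variable {d D μ ν lam ξ1 ξ2 c cK : ℝ}

lemma sq_sub_add_sq_sub_le_of_mem_Gset (hd : 0 < d) (hunit : ξ1 ^ 2 + ξ2 ^ 2 = 1) {p : ℝ × ℝ}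
    (hp : p ∈ Gset d lam ξ1 ξ2 c) :
    (2 * d * p.1 - c * ξ2) ^ 2 + (2 * d * p.2 - c * ξ1) ^ 2 ≤ c ^ 2 - 4 * d * lam := by
  have hp : 4 * d * lam ≤ 4 * d * (c * ξ1 * p.2 + c * ξ2 * p.1 - d * (p.2 ^ 2 + p.1 ^ 2)) :=
    mul_le_mul_of_nonneg_left hp (by positivity)
  linear_combination hp + c ^ 2 * hunit

lemma le_of_mem_Gset (hd : 0 < d) (hunit : ξ1 ^ 2 + ξ2 ^ 2 = 1) (hcK : cK ^ 2 = 4 * d * lam)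
    (hc : 0 ≤ c) {p : ℝ × ℝ} (hp : p ∈ Gset d lam ξ1 ξ2 c) : cK ≤ c := by
  have := sq_sub_add_sq_sub_le_of_mem_Gset hd hunit hp
  nlinarith [sq_nonneg (2 * d * p.1 - c * ξ2), sq_nonneg (2 * d * p.2 - c * ξ1)]

lemma gVertex_mem_Gset (hd : 0 < d) (hunit : ξ1 ^ 2 + ξ2 ^ 2 = 1)
    (hcK : cK ^ 2 = 4 * d * lam) : gVertex d ξ1 ξ2 cK ∈ Gset d lam ξ1 ξ2 cK := by
  show lam ≤ _
  simp only [gVertex]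
  field_simp
  linear_combination -cK ^ 2 * hunit - hcK

lemma tendsto_gVertex_of_mem_Gset (hd : 0 < d) (hunit : ξ1 ^ 2 + ξ2 ^ 2 = 1)
    (hcK : cK ^ 2 = 4 * d * lam) {c : ℕ → ℝ} {p : ℕ → ℝ × ℝ}
    (hc : Tendsto c atTop (𝓝 cK)) (hp : ∀ n, p n ∈ Gset d lam ξ1 ξ2 (c n)) :
    Tendsto p atTop (𝓝 (gVertex d ξ1 ξ2 cK)) := by
  have hr : Tendsto (fun n => √(c n ^ 2 - 4 * d * lam)) atTop (𝓝 0) := by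
    simpa [hcK] using ((hc.pow 2).sub_const (4 * d * lam)).sqrt
  have hcoord : ∀ {x : ℕ → ℝ} {a : ℝ}, (∀ n, (2 * d * x n - c n * a) ^ 2 ≤ c n ^ 2 - 4 * d * lam) →
      Tendsto x atTop (𝓝 (cK * a / (2 * d))) := by
    intro x a hx
    have herr : Tendsto (fun n => 2 * d * x n - c n * a) atTop (𝓝 0) :=
      squeeze_zero_norm (fun n => Real.abs_le_sqrt (hx n)) hr
    have := (herr.add (hc.mul_const a)).div_const (2 * d)
    rw [zero_add] at this
    refine this.congr fun n => ?_
    field_simp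
    ring
  have hbound := fun n => sq_sub_add_sq_sub_le_of_mem_Gset hd hunit (hp n)
  refine Prod.tendsto_iff _ _ |>.2 ⟨hcoord fun n => ?_, hcoord fun n => ?_⟩
  · nlinarith [hbound n, sq_nonneg (2 * d * (p n).2 - c n * ξ1)]
  · nlinarith [hbound n, sq_nonneg (2 * d * (p n).1 - c n * ξ2)]

lemma Sfun_gVertex (hd : d ≠ 0) (hunit : ξ1 ^ 2 + ξ2 ^ 2 = 1) (h : 2 * ν + c * ξ2 ≠ 0) :
    Sfun d D μ ν ξ1 ξ2 c (gVertex d ξ1 ξ2 c) =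
      c ^ 2 / (2 * d) - D * c ^ 2 * ξ1 ^ 2 / (4 * d ^ 2) + μ * c * ξ2 / (2 * ν + c * ξ2) := by
  have h' : ν + d * (c * ξ2 / (2 * d)) = (2 * ν + c * ξ2) / 2 := by field_simp
  simp only [Sfun, gVertex, chiF, h']
  field_simp
  linear_combination (8 * d * c ^ 2 * (2 * ν + c * ξ2)) * hunit

lemma continuousAt_Sfun (hd : 0 < d) (hν : 0 < ν) (hξ2 : 0 ≤ ξ2) (hcK : 0 ≤ cK) :
    ContinuousAt (fun q : ℝ × ℝ × ℝ => Sfun d D μ ν ξ1 ξ2 q.1 q.2) (cK, gVertex d ξ1 ξ2 cK) := by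
  have : ν + d * (cK * ξ2 / (2 * d)) ≠ 0 := by positivity
  simp only [Sfun, chiF]
  fun_prop (disch := exact this)

lemma wstar_eq_iff_Sfun_gVertex_nonneg (hd : 0 < d) (hν : 0 < ν) (hξ2 : 0 ≤ ξ2)
    (hunit : ξ1 ^ 2 + ξ2 ^ 2 = 1) (hcK : cK ^ 2 = 4 * d * lam) (hcK_pos : 0 < cK) :
    wstar d D μ ν lam ξ1 ξ2 = cK ↔ 0 ≤ Sfun d D μ ν ξ1 ξ2 cK (gVertex d ξ1 ξ2 cK) := by
  set W := {c : ℝ | 0 < c ∧ (Sset d D μ ν ξ1 ξ2 c ∩ Gset d lam ξ1 ξ2 c).Nonempty}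
  have hW_lower : ∀ c ∈ W, cK ≤ c := fun c ⟨hc, p, _, hpG⟩ =>
    le_of_mem_Gset hd hunit hcK hc.le hpG
  constructor
  · intro hw
    have hW : W.Nonempty := by
      by_contra h
      rw [not_nonempty_iff_eq_empty] at h
      simp only [wstar, W, h, Real.sInf_empty] at hw
      linarith
    obtain ⟨c, -, hc_lim, hcW⟩ := exists_seq_tendsto_sInf hW ⟨0, fun c hc => hc.1.le⟩
    rw [show sInf W = cK from hw] at hc_lim
    choose p hpS hpG using fun n => (hcW n).2
    have hp_lim := tendsto_gVertex_of_mem_Gset hd hunit hcK hc_lim hpG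
    exact ge_of_tendsto' ((continuousAt_Sfun hd hν hξ2 hcK_pos.le).tendsto.comp
      (hc_lim.prodMk_nhds hp_lim)) fun n => (hpS n).2
  · intro hS
    have hβ : -(ν / d) < (gVertex d ξ1 ξ2 cK).1 := by
      simp only [gVertex]
      have : 0 < ν / d := by positivity
      have : 0 ≤ cK * ξ2 / (2 * d) := by positivity
      linarith
    have hcK_mem : cK ∈ W := ⟨hcK_pos, _, ⟨hβ, hS⟩, gVertex_mem_Gset hd hunit hcK⟩
    exact IsLeast.csInf_eq ⟨hcK_mem, hW_lower⟩

lemma Sfun_gVertex_nonneg_iff_PhiF_nonneg (hd : 0 < d) (hν : 0 < ν) (hξ2 : 0 ≤ ξ2)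
    (hunit : ξ1 ^ 2 + ξ2 ^ 2 = 1) (hcK : 0 < cK) :
    0 ≤ Sfun d D μ ν ξ1 ξ2 cK (gVertex d ξ1 ξ2 cK) ↔ 0 ≤ PhiF d D μ ν cK ξ2 := by
  have hden : 2 * ν + cK * ξ2 ≠ 0 := by positivity
  have hPhi : PhiF d D μ ν cK ξ2 =
      4 * d ^ 2 / cK ^ 2 * Sfun d D μ ν ξ1 ξ2 cK (gVertex d ξ1 ξ2 cK) := by
    rw [Sfun_gVertex hd.ne' hunit hden, PhiF, show ξ2 ^ 2 - 1 = -ξ1 ^ 2 by linarith,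
      show 2 * ν * cK + cK ^ 2 * ξ2 = cK * (2 * ν + cK * ξ2) by ring]
    field_simp
    ring
  rw [hPhi, mul_nonneg_iff_of_pos_left (by positivity)]

lemma PhiF_nonneg_of_le_two_mul (hd : 0 ≤ d) (hμ : 0 ≤ μ) (hν : 0 < ν) (hcK : 0 < cK) {s : ℝ}
    (hs : 0 ≤ s) (hs1 : s ≤ 1) (hD : D ≤ 2 * d) : 0 ≤ PhiF d D μ ν cK s := by
  have hfrac : 0 ≤ 4 * d ^ 2 * μ * s / (2 * ν * cK + cK ^ 2 * s) := by positivity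
  have hD' : 0 ≤ 2 * d + D * (s ^ 2 - 1) := by
    have ht : 0 ≤ 1 - s ^ 2 := by nlinarith
    nlinarith [mul_nonneg hd (sq_nonneg s), mul_nonneg (sub_nonneg.2 hD) ht]
  exact add_nonneg hD' hfrac

lemma PhiF_strictMonoOn (hd : 0 < d) (hD : 0 ≤ D) (hμ : 0 < μ) (hν : 0 < ν) (hcK : 0 < cK) :
    StrictMonoOn (PhiF d D μ ν cK) (Ici 0) := by
  intro a (ha : 0 ≤ a) b (hb : 0 ≤ b) hab
  have hsq : D * (a ^ 2 - 1) ≤ D * (b ^ 2 - 1) := by gcongr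
  have hfrac : a / (2 * ν * cK + cK ^ 2 * a) < b / (2 * ν * cK + cK ^ 2 * b) := by
    rw [div_lt_div_iff₀ (by positivity) (by positivity)]
    nlinarith [mul_pos (mul_pos hν hcK) (sub_pos.2 hab)]
  have := mul_lt_mul_of_pos_left hfrac (by positivity : 0 < 4 * d ^ 2 * μ)
  simp only [PhiF, mul_div_assoc]
  linarith

end

theorem statement15_general
    (d D μ ν lam : ℝ) (hd : 0 < d) (hμ : 0 < μ) (hν : 0 < ν)
    (hlam : 0 < lam)
    (ξ1 ξ2 : ℝ) (hξ2 : 0 ≤ ξ2) (hunit : ξ1 ^ 2 + ξ2 ^ 2 = 1) :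
    (wstar d D μ ν lam ξ1 ξ2 = 2 * Real.sqrt (d * lam) ↔
      -(μ * (2 * Real.sqrt (d * lam)) * ξ2 / (2 * ν + 2 * Real.sqrt (d * lam) * ξ2)) ≤
        (2 * Real.sqrt (d * lam)) ^ 2 / (2 * d) -
          D * (2 * Real.sqrt (d * lam)) ^ 2 * ξ1 ^ 2 / (4 * d ^ 2)) ∧
    (-(μ * (2 * Real.sqrt (d * lam)) * ξ2 / (2 * ν + 2 * Real.sqrt (d * lam) * ξ2)) ≤
        (2 * Real.sqrt (d * lam)) ^ 2 / (2 * d) -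
          D * (2 * Real.sqrt (d * lam)) ^ 2 * ξ1 ^ 2 / (4 * d ^ 2) ↔
      0 ≤ PhiF d D μ ν (2 * Real.sqrt (d * lam)) ξ2) ∧
    (D ≤ 2 * d → wstar d D μ ν lam ξ1 ξ2 = 2 * Real.sqrt (d * lam)) ∧
    (∀ s₀ : ℝ, 2 * d < D → s₀ ∈ Ioo (0:ℝ) 1 →
      PhiF d D μ ν (2 * Real.sqrt (d * lam)) s₀ = 0 →
      (wstar d D μ ν lam ξ1 ξ2 = 2 * Real.sqrt (d * lam) ↔ s₀ ≤ ξ2)) := by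
  set cK := 2 * Real.sqrt (d * lam) with hcK_def
  have hcK_pos : 0 < cK := by positivity
  have hcK : cK ^ 2 = 4 * d * lam := by
    rw [hcK_def, mul_pow, Real.sq_sqrt (by positivity)]
    ring
  have hΦ : -(μ * cK * ξ2 / (2 * ν + cK * ξ2)) ≤
      cK ^ 2 / (2 * d) - D * cK ^ 2 * ξ1 ^ 2 / (4 * d ^ 2) ↔ 0 ≤ PhiF d D μ ν cK ξ2 := by
    rw [← Sfun_gVertex_nonneg_iff_PhiF_nonneg hd hν hξ2 hunit hcK_pos,
      Sfun_gVertex hd.ne' hunit (by positivity), neg_le_iff_add_nonneg]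
  have hw : wstar d D μ ν lam ξ1 ξ2 = cK ↔ 0 ≤ PhiF d D μ ν cK ξ2 :=
    (wstar_eq_iff_Sfun_gVertex_nonneg hd hν hξ2 hunit hcK hcK_pos).trans
      (Sfun_gVertex_nonneg_iff_PhiF_nonneg hd hν hξ2 hunit hcK_pos)
  have hξ2_le : ξ2 ≤ 1 := by nlinarith
  refine ⟨hw.trans hΦ.symm, hΦ,
    fun hD => hw.2 (PhiF_nonneg_of_le_two_mul hd.le hμ.le hν hcK_pos hξ2 hξ2_le hD),
    fun s₀ hD hs₀ hΦs₀ => ?_⟩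
  rw [hw, ← hΦs₀]
  exact (PhiF_strictMonoOn hd (by linarith) hμ hν hcK_pos).le_iff_le hs₀.1.le hξ2

theorem statement15
    (d D μ ν lam : ℝ) (hd : 0 < d) (hD : 0 < D) (hμ : 0 < μ) (hν : 0 < ν)
    (hlam : 0 < lam)
    (ξ1 ξ2 : ℝ) (hξ1 : 0 ≤ ξ1) (hξ2 : 0 ≤ ξ2) (hunit : ξ1 ^ 2 + ξ2 ^ 2 = 1) :
    (wstar d D μ ν lam ξ1 ξ2 = 2 * Real.sqrt (d * lam) ↔
      -(μ * (2 * Real.sqrt (d * lam)) * ξ2 / (2 * ν + 2 * Real.sqrt (d * lam) * ξ2)) ≤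
        (2 * Real.sqrt (d * lam)) ^ 2 / (2 * d) -
          D * (2 * Real.sqrt (d * lam)) ^ 2 * ξ1 ^ 2 / (4 * d ^ 2)) ∧
    (-(μ * (2 * Real.sqrt (d * lam)) * ξ2 / (2 * ν + 2 * Real.sqrt (d * lam) * ξ2)) ≤
        (2 * Real.sqrt (d * lam)) ^ 2 / (2 * d) -
          D * (2 * Real.sqrt (d * lam)) ^ 2 * ξ1 ^ 2 / (4 * d ^ 2) ↔
      0 ≤ PhiF d D μ ν (2 * Real.sqrt (d * lam)) ξ2) ∧
    (D ≤ 2 * d → wstar d D μ ν lam ξ1 ξ2 = 2 * Real.sqrt (d * lam)) ∧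
    (∀ s₀ : ℝ, 2 * d < D → s₀ ∈ Ioo (0:ℝ) 1 →
      PhiF d D μ ν (2 * Real.sqrt (d * lam)) s₀ = 0 →
      (wstar d D μ ν lam ξ1 ξ2 = 2 * Real.sqrt (d * lam) ↔ s₀ ≤ ξ2)) :=
  statement15_general d D μ ν lam hd hμ hν hlam ξ1 ξ2 hξ2 hunit
end
end
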